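/- Let G be a topological group, μ a Radon probability measure on G, f ∈ L¹(G, μ) such that the measure |f| dμ is Radon, and s ∈ C_b(G, F). Then the convolution (f ∗ s)(g) = ∫_G f(h) s(hg) dμ(h) is a bounded continuous function on G; i.e., f ∗ s ∈ C_b(G, F). -/

import Mathlib

/-!
Put `ν = ‖f‖ dμ`, a finite inner regular measure. Then
`‖(f ∗ s)(g) - (f ∗ s)(g₀)‖ ≤ ∫ ‖s(hg) - s(hg₀)‖ dν(h)`. Off a compact set `K` of small
`ν`-measure the integrand is at most `2‖s‖`, and on `K` it is uniformly small for `g` near `g₀`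
by the tube lemma. Since `G` need not be first countable, dominated convergence is not available;
the tightness of `ν` replaces it.
-/

open MeasureTheory Filter Topology Set
open scoped ENNReal NNReal

section

variable {X Y E : Type*} [TopologicalSpace X] [TopologicalSpace Y] [SeminormedAddCommGroup E]

theorem IsCompact.eventually_forall_enorm_sub_lt {F : X → Y → E} (hF : Continuous F.uncurry)
    {K : Set Y} (hK : IsCompact K) (x₀ : X) {δ : ℝ≥0∞} (hδ : 0 < δ) :
    ∀ᶠ x in 𝓝 x₀, ∀ y ∈ K, ‖F x y - F x₀ y‖ₑ < δ := by
  refine hK.eventually_forall_of_forall_eventually fun y _ => ?_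
  have hcont : Continuous fun z : X × Y => ‖F z.1 z.2 - F x₀ z.2‖ₑ := by
    have hF₀ : Continuous fun z : X × Y => F x₀ z.2 :=
      hF.comp (continuous_const.prodMk continuous_snd)
    exact (hF.sub hF₀).enorm
  exact (hcont.tendsto (x₀, y)).eventually_lt_const (by simpa [enorm_eq_nnnorm] using hδ)

theorem tendsto_lintegral_enorm_sub_of_continuous_of_bounded [MeasurableSpace Y]
    [BorelSpace Y] [R1Space Y] {ν : Measure Y} [IsFiniteMeasure ν] [ν.InnerRegularCompactLTTop]
    {F : X → Y → E} (hF : Continuous F.uncurry) {C : ℝ≥0} (hC : ∀ x y, ‖F x y‖ₑ ≤ C) (x₀ : X) :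
    Tendsto (fun x => ∫⁻ y, ‖F x y - F x₀ y‖ₑ ∂ν) (𝓝 x₀) (𝓝 0) := by
  refine ENNReal.tendsto_nhds_zero.2 fun ε hε => ?_
  have hε2 : ε / 2 ≠ 0 := (ENNReal.half_pos hε.ne').ne'
  obtain ⟨δ, hδ, hδε⟩ := ENNReal.exists_pos_mul_lt (measure_ne_top ν univ) hε2
  obtain ⟨η, hη, hηε⟩ := ENNReal.exists_pos_mul_lt (a := 2 * C) (by finiteness) hε2
  obtain ⟨K, -, hKc, hKcl, hνK⟩ :=
    MeasurableSet.univ.exists_isCompact_isClosed_sdiff_lt (measure_ne_top ν univ) hη.ne'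
  filter_upwards [hKc.eventually_forall_enorm_sub_lt hF x₀ hδ] with x hx
  have hbound : ∀ y, ‖F x y - F x₀ y‖ₑ ≤ 2 * C := fun y =>
    enorm_sub_le.trans <| (add_le_add (hC x y) (hC x₀ y)).trans_eq (two_mul _).symm
  calc ∫⁻ y, ‖F x y - F x₀ y‖ₑ ∂ν
      = ∫⁻ y in K, ‖F x y - F x₀ y‖ₑ ∂ν + ∫⁻ y in Kᶜ, ‖F x y - F x₀ y‖ₑ ∂ν :=
        (lintegral_add_compl _ hKcl.measurableSet).symm
    _ ≤ δ * ν univ + η * (2 * C) := by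
        gcongr
        · calc ∫⁻ y in K, ‖F x y - F x₀ y‖ₑ ∂ν ≤ ∫⁻ _ in K, δ ∂ν :=
                setLIntegral_mono' hKcl.measurableSet fun y hy => (hx y hy).le
            _ ≤ δ * ν univ := by rw [setLIntegral_const]; gcongr; exact subset_univ K
        · calc ∫⁻ y in Kᶜ, ‖F x y - F x₀ y‖ₑ ∂ν ≤ ∫⁻ _ in Kᶜ, 2 * (C : ℝ≥0∞) ∂ν :=
                setLIntegral_mono' hKcl.measurableSet.compl fun y _ => hbound y
            _ ≤ η * (2 * C) := by
                rw [setLIntegral_const, compl_eq_univ_sdiff, mul_comm]; gcongr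
    _ ≤ ε / 2 + ε / 2 := by gcongr
    _ = ε := ENNReal.add_halves ε

end

theorem stmt_1_general {𝕜 : Type*} [RCLike 𝕜] {G : Type*} [Group G] [TopologicalSpace G]
    [IsTopologicalGroup G] [MeasurableSpace G] [BorelSpace G]
    (μ : Measure G)
    (f : G → 𝕜) (hf : Integrable f μ)
    (hfRadon : (μ.withDensity fun x => (‖f x‖₊ : ENNReal)).InnerRegular)
    (s : BoundedContinuousFunction G 𝕜) :
    Continuous (fun g : G => ∫ h, f h * s (h * g) ∂μ) ∧
      ∃ C : ℝ, ∀ g : G, ‖∫ h, f h * s (h * g) ∂μ‖ ≤ C := by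
  have hint : ∀ g, Integrable (fun h => f h * s (h * g)) μ := fun g =>
    hf.mul_bdd (s.continuous.comp (continuous_mul_const g)).aestronglyMeasurable
      (ae_of_all _ fun h => s.norm_coe_le_norm _)
  refine ⟨continuous_iff_continuousAt.2 fun g₀ => ?_,
    ⟨∫ h, ‖f h‖ * ‖s‖ ∂μ, fun g => norm_integral_le_of_norm_le (hf.norm.mul_const _)
      (ae_of_all _ fun h => ?_)⟩⟩
  · have : IsFiniteMeasure (μ.withDensity fun x => (‖f x‖₊ : ENNReal)) :=
      isFiniteMeasure_withDensity hf.2.ne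
    refine tendsto_integral_of_L1 _ (hint g₀).aestronglyMeasurable (Eventually.of_forall hint) ?_
    convert tendsto_lintegral_enorm_sub_of_continuous_of_bounded
      (ν := μ.withDensity fun x => (‖f x‖₊ : ENNReal)) (F := fun g h => s (h * g))
      (by fun_prop) (fun _ _ => enorm_le_coe.2 (s.nnnorm_coe_le_nnnorm _)) g₀ using 2 with g
    rw [lintegral_withDensity_eq_lintegral_mul_non_measurable₀ _
      hf.1.aemeasurable.nnnorm.coe_nnreal_ennreal
      (ae_of_all _ fun _ => ENNReal.coe_lt_top)]
    simp only [← mul_sub, Pi.mul_apply, enorm_eq_nnnorm, nnnorm_mul, ENNReal.coe_mul]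
  · rw [norm_mul]; gcongr; exact s.norm_coe_le_norm _

theorem stmt_1 {𝕜 : Type*} [RCLike 𝕜] {G : Type*} [Group G] [TopologicalSpace G]
    [IsTopologicalGroup G] [MeasurableSpace G] [BorelSpace G]
    (μ : Measure G) [IsProbabilityMeasure μ] [μ.InnerRegular]
    (f : G → 𝕜) (hf : Integrable f μ)
    (hfRadon : (μ.withDensity fun x => (‖f x‖₊ : ENNReal)).InnerRegular)
    (s : BoundedContinuousFunction G 𝕜) :
    Continuous (fun g : G => ∫ h, f h * s (h * g) ∂μ) ∧
      ∃ C : ℝ, ∀ g : G, ‖∫ h, f h * s (h * g) ∂μ‖ ≤ C :=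
  stmt_1_general μ f hf hfRadon s
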